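/- arXiv:2310.09999 — 5 statements merged into one kernel-verified Lean document; each statement's English description precedes it below -/
import Mathlib

section
/- Let G : ℝᵏ → ℝⁿ be any map, M ∈ ℝ^{m×n}, and l a nonnegative integer. Suppose there exists z ≠ z₀ in ℝᵏ with ‖M·G(z) − M·G(z₀)‖₀ ≤ 2l. Then there exists an outlier vector e ∈ ℝᵐ with ‖e‖₀ ≤ l such that, with y = M·G(z₀) + e, z₀ is not a unique minimizer of ‖M·G(z) − y‖₀, i.e., there exists z ≠ z₀ achieving ‖M·G(z) − y‖₀ ≤ ‖M·G(z₀) − y‖₀. -/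
/-- The ℓ₀ "norm": number of nonzero entries of a vector. -/
noncomputable def l0 {m : ℕ} (v : Fin m → ℝ) : ℕ :=
  (Finset.univ.filter fun i => v i ≠ 0).card

/-! Of the `s ≤ 2l` entries in which `M G z` and `M G z₀` differ, put `⌈s/2⌉` into the outlier `e`.
Then `y = M G z₀ + e` differs from `M G z₀` in the `⌈s/2⌉ ≤ l` entries of `e` and from `M G z`
only in the remaining `⌊s/2⌋` entries, so `z` fits `y` at least as well as `z₀`. -/

open Finset

theorem Finset.exists_subset_card_sdiff_le_card_le {α : Type*} [DecidableEq α] (S : Finset α)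
    {l : ℕ} (hS : #S ≤ 2 * l) : ∃ T ⊆ S, #(S \ T) ≤ #T ∧ #T ≤ l := by
  obtain ⟨T, hTS, hT⟩ := S.exists_subset_card_eq (show (#S + 1) / 2 ≤ #S by omega)
  exact ⟨T, hTS, by rw [card_sdiff_of_subset hTS]; omega, by omega⟩

section SparseSplit

variable {ι R : Type*} [Fintype ι] [DecidableEq ι] [AddGroup R] [DecidableEq R]

theorem filter_ite_mem_ne_zero {d : ι → R} {T : Finset ι} (hT : T ⊆ ({i | d i ≠ 0} : Finset ι)) :
    ({i | (if i ∈ T then d i else 0) ≠ 0} : Finset ι) = T := by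
  ext i
  by_cases hi : i ∈ T
  · simpa [hi] using hT hi
  · simp [hi]

theorem filter_sub_ite_mem_ne_zero (d : ι → R) (T : Finset ι) :
    ({i | d i - (if i ∈ T then d i else 0) ≠ 0} : Finset ι) =
      ({i | d i ≠ 0} : Finset ι) \ T := by
  ext i
  by_cases hi : i ∈ T <;> simp [hi]

theorem exists_sparse_card_sub_ne_zero_le (d : ι → R) {l : ℕ} (hd : #{i | d i ≠ 0} ≤ 2 * l) :
    ∃ e : ι → R, #{i | e i ≠ 0} ≤ l ∧ #{i | d i - e i ≠ 0} ≤ #{i | e i ≠ 0} := by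
  obtain ⟨T, hT, hbalanced, hTl⟩ := exists_subset_card_sdiff_le_card_le _ hd
  refine ⟨fun i => if i ∈ T then d i else 0, ?_, ?_⟩
  · simpa only [filter_ite_mem_ne_zero hT] using hTl
  · simpa only [filter_ite_mem_ne_zero hT, filter_sub_ite_mem_ne_zero] using hbalanced

end SparseSplit

/-- If some `z ≠ z₀` satisfies `‖M·G z − M·G z₀‖₀ ≤ 2l`, then there is an
`l`-sparse outlier `e` such that, with `y = M·G z₀ + e`, `z₀` is not a unique
minimizer of `‖M·G z − y‖₀`. -/
theorem l0_recovery_necessary {k n m : ℕ} (G : (Fin k → ℝ) → (Fin n → ℝ))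
    (M : Matrix (Fin m) (Fin n) ℝ) (l : ℕ) (z₀ : Fin k → ℝ)
    (hbad : ∃ z : Fin k → ℝ, z ≠ z₀ ∧
      l0 (fun i => M.mulVec (G z) i - M.mulVec (G z₀) i) ≤ 2 * l) :
    ∃ e : Fin m → ℝ, l0 e ≤ l ∧
      ∃ z : Fin k → ℝ, z ≠ z₀ ∧
        l0 (fun i => M.mulVec (G z) i - (M.mulVec (G z₀) i + e i)) ≤
          l0 (fun i => M.mulVec (G z₀) i - (M.mulVec (G z₀) i + e i)) := by
  obtain ⟨z, hz, hsparse⟩ := hbad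
  obtain ⟨e, he, hfit⟩ := exists_sparse_card_sub_ne_zero_le _ hsparse
  refine ⟨e, he, z, hz, ?_⟩
  simpa only [l0, ← sub_sub, sub_self, zero_sub, neg_ne_zero] using hfit
end

section
/- Let G(z) = H_d·H_{d−1}⋯H₁·z be a d-layer linear generator where each Hᵢ has i.i.d. standard Gaussian entries, nᵢ ≥ k for i < d, and n = n_d > k. Let M ∈ ℝ^{m×n} be an independent random matrix with i.i.d. standard Gaussian entries. If l ≤ (m − 1 − k)/2, then with probability 1 the following holds: for every z₀ ∈ ℝᵏ and every e ∈ ℝᵐ with ‖e‖₀ ≤ l, setting y = M·G(z₀) + e, the vector z₀ is the unique minimizer of ‖M·G(z) − y‖₀ over z ∈ ℝᵏ. -/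
open MeasureTheory ProbabilityTheory

instance matrixMeasurableSpace (p q : ℕ) : MeasurableSpace (Matrix (Fin p) (Fin q) ℝ) :=
  MeasurableSpace.pi

/-- The distribution of a `p × q` random matrix with i.i.d. standard Gaussian
entries. -/
noncomputable def gaussMatrix (p q : ℕ) : Measure (Matrix (Fin p) (Fin q) ℝ) :=
  Measure.pi fun _ : Fin p => Measure.pi fun _ : Fin q => gaussianReal 0 1

/-- The product `H_d ⋯ H_1` of a chain of matrices. -/
def chainProd (dims : ℕ → ℕ) :
    ∀ d : ℕ, (∀ i : Fin d, Matrix (Fin (dims (i + 1))) (Fin (dims i)) ℝ) →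
      Matrix (Fin (dims d)) (Fin (dims 0)) ℝ
  | 0, _ => 1
  | d + 1, H =>
      (show Matrix (Fin (dims (d + 1))) (Fin (dims d)) ℝ from H (Fin.last d)) *
        chainProd dims d (fun i => H i.castSucc)

/-!
Put `B = M H_d ⋯ H₁`. If every `k` rows of `B` are linearly independent, then for `z ≠ z₀` the
vector `B (z - z₀)` has at most `k - 1` zero entries, so `B z` differs from `y = B z₀ + e` in at
least `m - k + 1 - l > l ≥ ‖e‖₀` entries.

That every `k` rows of `B` are independent almost surely rests on one fact: if `A` is injective,
then `k` fixed rows of `G A`, with `G` Gaussian, form a singular matrix with probability zero.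
Induct on `k`: once the complementary minor of the last row is nonzero, expanding the
determinant along that row makes it a nonzero linear functional of the corresponding row of `G`,
and a Gaussian vector lies in a hyperplane with probability zero. Applied layer by layer this makes
`H_d ⋯ H₁` injective almost surely, and then applied to `M` it gives the claim.
-/

open Matrix

instance (p q : ℕ) : BorelSpace (Matrix (Fin p) (Fin q) ℝ) :=
  inferInstanceAs (BorelSpace (Fin p → Fin q → ℝ))

instance (p q : ℕ) : SecondCountableTopology (Matrix (Fin p) (Fin q) ℝ) :=
  inferInstanceAs (SecondCountableTopology (Fin p → Fin q → ℝ))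

instance (p q : ℕ) : IsProbabilityMeasure (gaussMatrix p q) :=
  inferInstanceAs (IsProbabilityMeasure
    (Measure.pi fun _ : Fin p => Measure.pi fun _ : Fin q => gaussianReal 0 1))

theorem MeasureTheory.Measure.pi_eq_zero_of_forall_update {ι : Type*} [Fintype ι]
    [DecidableEq ι] {X : ι → Type*} [∀ i, MeasurableSpace (X i)] (μ : ∀ i, Measure (X i))
    [∀ i, SigmaFinite (μ i)] (i : ι) {s : Set (∀ i, X i)} (hs : MeasurableSet s)
    (h : ∀ x, μ i {y | Function.update x i y ∈ s} = 0) :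
    Measure.pi μ s = 0 := by
  rw [← lintegral_indicator_one hs, ← lintegral_zero]
  refine lintegral_eq_of_lmarginal_eq {i} (measurable_one.indicator hs) measurable_const ?_
  ext x
  rw [lmarginal_singleton, lmarginal_singleton, lintegral_zero]
  exact (lintegral_indicator_one (measurable_update x hs)).trans (h x)

theorem MeasureTheory.Measure.pi_dotProduct_eq_zero {ι : Type*} [Fintype ι] [DecidableEq ι]
    (μ : ι → Measure ℝ) [∀ i, SigmaFinite (μ i)] (hμ : ∀ i, μ i ≪ volume) {w : ι → ℝ}
    (hw : w ≠ 0) : Measure.pi μ {x | x ⬝ᵥ w = 0} = 0 := by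
  obtain ⟨i, hi⟩ := Function.ne_iff.1 hw
  refine Measure.pi_eq_zero_of_forall_update μ i ?_ fun x => hμ i ?_
  · exact measurableSet_eq_fun (by fun_prop) measurable_const
  · refine Set.Subsingleton.measure_zero (fun y hy y' hy' => ?_) _
    simp only [Set.mem_ofPred_eq, Pi.update_eq_sub_add_single, add_dotProduct,
      single_dotProduct] at hy hy'
    exact mul_right_cancel₀ hi (by linarith)

theorem Matrix.det_updateRow_eq_adjugate_dotProduct {n R : Type*} [Fintype n] [DecidableEq n]
    [CommRing R] (N : Matrix n n R) (i : n) (y : n → R) :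
    (N.updateRow i y).det = Nᵀ.adjugate i ⬝ᵥ y := by
  rw [← cramer_transpose_apply, cramer_eq_adjugate_mulVec]
  rfl

theorem Matrix.mulVec_injective_submatrix_id {m n o R : Type*} [Fintype n] [Fintype o]
    [CommRing R] {A : Matrix m n R} (hA : Function.Injective A.mulVec) {f : o → n}
    (hf : Function.Injective f) : Function.Injective (A.submatrix id f).mulVec :=
  Matrix.mulVec_injective_iff.2 ((Matrix.mulVec_injective_iff.1 hA).comp f hf)

theorem Matrix.mulVec_injective_of_det_submatrix_ne_zero {m n R : Type*} [Fintype n]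
    [DecidableEq n] [CommRing R] [NoZeroDivisors R] {B : Matrix m n R} {e : n → m}
    (h : (B.submatrix e id).det ≠ 0) : Function.Injective B.mulVec := fun v w hvw =>
  sub_eq_zero.1 <| eq_zero_of_mulVec_eq_zero h <| by
    rw [mulVec_sub, sub_eq_zero]
    exact congrArg (· ∘ e) hvw

theorem Matrix.submatrix_updateRow_of_injective {l m n o α : Type*} [DecidableEq l]
    [DecidableEq m] (A : Matrix m n α) {e : l → m} (he : Function.Injective e) (f : o → n)
    (i : l) (b : n → α) :
    (A.updateRow (e i) b).submatrix e f = (A.submatrix e f).updateRow i (b ∘ f) := by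
  ext r c
  obtain rfl | hr := eq_or_ne r i
  · simp
  · simp [updateRow_apply, hr, he.ne hr]

theorem ae_det_submatrix_mul_ne_zero {n p : ℕ} :
    ∀ {k : ℕ} {A : Matrix (Fin n) (Fin k) ℝ}, Function.Injective A.mulVec →
      ∀ {e : Fin k → Fin p}, Function.Injective e →
        ∀ᵐ G ∂gaussMatrix p n, (G.submatrix e id * A).det ≠ 0
  | 0, _, _, _, _ => by simp
  | k + 1, A, hA, e, he => by
    set minor : Matrix (Fin p) (Fin n) ℝ → ℝ :=
      fun G => (G.submatrix (e ∘ Fin.castSucc) id * A.submatrix id Fin.succ).det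
    have h_minor : ∀ᵐ G ∂gaussMatrix p n, minor G ≠ 0 :=
      ae_det_submatrix_mul_ne_zero (mulVec_injective_submatrix_id hA (Fin.succ_injective k))
        (he.comp (Fin.castSucc_injective k))
    suffices gaussMatrix p n {G | minor G ≠ 0 ∧ (G.submatrix e id * A).det = 0} = 0 by
      filter_upwards [h_minor, measure_eq_zero_iff_ae_notMem.1 this] with G hG hG'
      exact fun h => hG' ⟨hG, h⟩
    have h_meas : MeasurableSet
        {G : Matrix (Fin p) (Fin n) ℝ | minor G ≠ 0 ∧ (G.submatrix e id * A).det = 0} :=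
      (measurableSet_eq_fun (Continuous.measurable (by fun_prop)) measurable_const).compl.inter
        (measurableSet_eq_fun (Continuous.measurable (by fun_prop)) measurable_const)
    refine Measure.pi_eq_zero_of_forall_update _ (e (Fin.last k)) h_meas
      fun (F : Matrix (Fin p) (Fin n) ℝ) => ?_
    have h_minor_update : ∀ x, minor (F.updateRow (e (Fin.last k)) x) = minor F := fun x => by
      simp only [minor]
      congr 2
      ext r c
      simp [updateRow_apply, he.ne (Fin.castSucc_lt_last r).ne]
    -- the cofactors of the last row
    set c := (F.submatrix e id * A)ᵀ.adjugate (Fin.last k)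
    have h_det_update : ∀ x,
        ((F.updateRow (e (Fin.last k)) x).submatrix e id * A).det = x ⬝ᵥ (A *ᵥ c) := fun x => by
      rw [submatrix_updateRow_of_injective _ he, updateRow_mul,
        det_updateRow_eq_adjugate_dotProduct, dotProduct_comm, dotProduct_mulVec]
      rfl
    have h_c : c 0 = (-1) ^ k * minor F := by
      simp only [c, minor, ← adjugate_transpose, transpose_apply,
        adjugate_fin_succ_eq_det_submatrix, Fin.succAbove_last, Fin.succAbove_zero]
      rw [submatrix_mul _ _ _ id _ Function.bijective_id]
      simp
    by_cases hF : minor F = 0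
    · exact measure_mono_null (fun x hx => hx.1 ((h_minor_update x).trans hF)) measure_empty
    have h_Ac : A *ᵥ c ≠ 0 := fun h => by
      have := congrFun (hA (h.trans (mulVec_zero A).symm)) 0
      simp [h_c, hF] at this
    refine measure_mono_null (fun x hx => ?_) (Measure.pi_dotProduct_eq_zero _
      (fun _ => gaussianReal_absolutelyContinuous 0 one_ne_zero) h_Ac)
    exact (h_det_update x).symm.trans hx.2

theorem MeasureTheory.measurePreserving_piFinSnoc {n : ℕ} {α : Fin (n + 1) → Type*}
    [∀ i, MeasurableSpace (α i)] (μ : ∀ i, Measure (α i)) [∀ i, SigmaFinite (μ i)] :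
    MeasurePreserving (fun x => (x (Fin.last n), fun j : Fin n => x j.castSucc)) (Measure.pi μ)
      ((μ (Fin.last n)).prod (Measure.pi fun j : Fin n => μ j.castSucc)) := by
  suffices ∀ g, g = (Fin.last n).succAbove → MeasurePreserving
      (fun x => (x (Fin.last n), fun j => x (g j))) (Measure.pi μ)
      ((μ (Fin.last n)).prod (Measure.pi fun j => μ (g j))) from this _ Fin.succAbove_last.symm
  rintro g rfl
  exact measurePreserving_piFinSuccAbove μ (Fin.last n)

theorem continuous_chainProd (dims : ℕ → ℕ) : ∀ d, Continuous (chainProd dims d)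
  | 0 => continuous_const
  | d + 1 => (continuous_apply (Fin.last d)).matrix_mul
      ((continuous_chainProd dims d).comp (continuous_pi fun i => continuous_apply i.castSucc))

theorem ae_det_submatrix_mul_ne_zero_prod {n p k : ℕ} {β : Type*} [MeasurableSpace β]
    {ν : Measure β} [SFinite ν] {A : β → Matrix (Fin n) (Fin k) ℝ} (hA_meas : Measurable A)
    (hA : ∀ᵐ b ∂ν, Function.Injective (A b).mulVec) {e : Fin k → Fin p}
    (he : Function.Injective e) :
    ∀ᵐ q ∂(gaussMatrix p n).prod ν, ((q.1 * A q.2).submatrix e id).det ≠ 0 := by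
  have h_meas : MeasurableSet {q : Matrix (Fin p) (Fin n) ℝ × β |
      ((q.1 * A q.2).submatrix e id).det ≠ 0} :=
    (measurableSet_eq_fun ((Continuous.measurable (by fun_prop :
      Continuous fun q : Matrix (Fin p) (Fin n) ℝ × Matrix (Fin n) (Fin k) ℝ =>
        ((q.1 * q.2).submatrix e id).det)).comp
      (measurable_fst.prodMk (hA_meas.comp measurable_snd))) measurable_const).compl
  rw [Measure.ae_prod_iff_ae_ae h_meas, Measure.ae_ae_comm h_meas]
  filter_upwards [hA] with b hb
  filter_upwards [ae_det_submatrix_mul_ne_zero hb he] with G hG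
  rwa [submatrix_mul _ _ _ id _ Function.bijective_id, submatrix_id_id]

theorem ae_injective_chainProd (dims : ℕ → ℕ) :
    ∀ d, (∀ i ≤ d, dims 0 ≤ dims i) →
      ∀ᵐ H ∂Measure.pi (fun i : Fin d => gaussMatrix (dims (i + 1)) (dims i)),
        Function.Injective (chainProd dims d H).mulVec
  | 0, _ => .of_forall fun _ _ _ h => by simpa [chainProd] using h
  | d + 1, hdims => by
    have h_last := ae_det_submatrix_mul_ne_zero_prod (continuous_chainProd dims d).measurable
      (ae_injective_chainProd dims d fun i hi => hdims i (hi.trans d.le_succ))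
      (Fin.castLE_injective (hdims (d + 1) le_rfl))
      (ν := Measure.pi fun i : Fin d => gaussMatrix (dims (i + 1)) (dims i))
    exact (measurePreserving_piFinSnoc fun i : Fin (d + 1) =>
      gaussMatrix (dims (i + 1)) (dims i)).quasiMeasurePreserving.ae
      (h_last.mono fun _ h => mulVec_injective_of_det_submatrix_ne_zero h)

theorem Matrix.card_lt_hammingNorm_mulVec_add {ι n R : Type*} [Fintype ι] [Fintype n]
    [DecidableEq n] [CommRing R] [NoZeroDivisors R] [DecidableEq R] {B : Matrix ι n R}
    (hB : ∀ e : n → ι, Function.Injective e → (B.submatrix e id).det ≠ 0) {v : n → R}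
    (hv : v ≠ 0) : Fintype.card ι < hammingNorm (B *ᵥ v) + Fintype.card n := by
  by_contra! h
  have h_zeros : Fintype.card n ≤ Fintype.card {i // (B *ᵥ v) i = 0} := by
    have := Finset.card_filter_add_card_filter_not (s := Finset.univ) (fun i => (B *ᵥ v) i = 0)
    rw [Fintype.card_subtype]
    simp only [hammingNorm, Finset.card_univ, ne_eq] at h this ⊢
    omega
  obtain ⟨f⟩ := Function.Embedding.nonempty_of_card_le h_zeros
  exact hv (eq_zero_of_mulVec_eq_zero (hB _ (Subtype.val_injective.comp f.injective))
    (funext fun j => (f j).2))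

theorem hammingNorm_sub {ι : Type*} [Fintype ι] {β : ι → Type*} [∀ i, AddCommGroup (β i)]
    [∀ i, DecidableEq (β i)] (x y : ∀ i, β i) : hammingNorm (x - y) = hammingDist x y := by
  rw [hammingDist_comm, hammingDist_eq_hammingNorm, neg_add_eq_sub]

theorem hammingDist_self_add {ι : Type*} [Fintype ι] {β : ι → Type*} [∀ i, AddGroup (β i)]
    [∀ i, DecidableEq (β i)] (x e : ∀ i, β i) : hammingDist x (x + e) = hammingNorm e := by
  simp [hammingDist, hammingNorm]

theorem Matrix.hammingDist_mulVec_lt {ι n R : Type*} [Fintype ι] [Fintype n]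
    [DecidableEq n] [CommRing R] [NoZeroDivisors R] [DecidableEq R] {B : Matrix ι n R}
    (hB : ∀ e : n → ι, Function.Injective e → (B.submatrix e id).det ≠ 0) {z₀ z : n → R}
    {y : ι → R} (hy : 2 * hammingDist (B *ᵥ z₀) y + Fintype.card n ≤ Fintype.card ι)
    (hz : z ≠ z₀) : hammingDist (B *ᵥ z₀) y < hammingDist (B *ᵥ z) y := by
  have h_far := card_lt_hammingNorm_mulVec_add hB (sub_ne_zero.2 hz)
  rw [mulVec_sub, hammingNorm_sub] at h_far
  have := hammingDist_triangle_right (B *ᵥ z) (B *ᵥ z₀) y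
  omega

theorem l0_eq_hammingNorm {m : ℕ} (v : Fin m → ℝ) : l0 v = hammingNorm v := rfl

/-- ℓ₀ recovery guarantee for a linear (identity-activation) multilayer
Gaussian generator `G(z) = H_d ⋯ H_1 z` with an independent Gaussian
measurement matrix `M`: if `l ≤ (m − 1 − k)/2` then with probability `1`, for
every ground truth `z₀` and every outlier vector `e` with `‖e‖₀ ≤ l`, setting
`y = M·G(z₀) + e`, `z₀` is the unique minimizer of `‖M·G(z) − y‖₀`. -/
theorem linear_generator_l0_recovery (d k m l : ℕ) (dims : ℕ → ℕ)
    (h0 : dims 0 = k) (hge : ∀ i < d, k ≤ dims i) (hlast : k < dims d)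
    (hl : (l : ℝ) ≤ ((m : ℝ) - 1 - k) / 2) :
    ((gaussMatrix m (dims d)).prod
        (Measure.pi fun i : Fin d => gaussMatrix (dims (i + 1)) (dims i)))
      {p : Matrix (Fin m) (Fin (dims d)) ℝ ×
          (∀ i : Fin d, Matrix (Fin (dims (i + 1))) (Fin (dims i)) ℝ) |
        ∀ z₀ : Fin (dims 0) → ℝ, ∀ e : Fin m → ℝ, l0 e ≤ l →
          ∀ z : Fin (dims 0) → ℝ, z ≠ z₀ →
            l0 (fun i => p.1.mulVec ((chainProd dims d p.2).mulVec z₀) i -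
                (p.1.mulVec ((chainProd dims d p.2).mulVec z₀) i + e i)) <
              l0 (fun i => p.1.mulVec ((chainProd dims d p.2).mulVec z) i -
                (p.1.mulVec ((chainProd dims d p.2).mulVec z₀) i + e i))} = 1 := by
  subst h0
  have hdims : ∀ i ≤ d, dims 0 ≤ dims i := fun i hi =>
    hi.lt_or_eq.elim (hge i) fun h => h ▸ hlast.le
  have hm : 2 * l + dims 0 ≤ m := by
    have : ((2 * l + dims 0 : ℕ) : ℝ) ≤ m := by push_cast; linarith
    exact_mod_cast this
  have h_minors : ∀ᵐ q ∂(gaussMatrix m (dims d)).prod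
      (Measure.pi fun i : Fin d => gaussMatrix (dims (i + 1)) (dims i)),
      ∀ e : Fin (dims 0) → Fin m, Function.Injective e →
        ((q.1 * chainProd dims d q.2).submatrix e id).det ≠ 0 := by
    refine ae_all_iff.2 fun e => ?_
    by_cases he : Function.Injective e
    · exact (ae_det_submatrix_mul_ne_zero_prod (continuous_chainProd dims d).measurable
        (ae_injective_chainProd dims d hdims) he).mono fun _ h _ => h
    · exact .of_forall fun _ h => (he h).elim
  refine (measure_congr (ae_eq_univ.2 (h_minors.mono fun q hq => ?_))).trans measure_univ
  intro z₀ e he z hz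
  simp only [l0_eq_hammingNorm, ← Pi.sub_def, ← Pi.add_def, hammingNorm_sub, mulVec_mulVec]
    at he ⊢
  refine Matrix.hammingDist_mulVec_lt hq ?_ hz
  rw [hammingDist_self_add, Fintype.card_fin, Fintype.card_fin]
  omega
end

section
/- Let G : ℝᵏ → ℝⁿ, let ρ* > 0, and let z₀ ∈ ℝᵏ. Suppose that for every r ∈ ℝᵏ, every nonzero c ∈ ℝᵏ, and every subset K ⊆ {1,…,n} with |K| ≤ ρ*·n, we have ‖(G(r+c) − G(r))_K‖₁ < ‖(G(r+c) − G(r))_{Kᶜ}‖₁. Then for every error vector e ∈ ℝⁿ with ‖e‖₀ ≤ ρ*·n, z₀ is the unique minimizer of ‖G(z) − (G(z₀) + e)‖₁ over z ∈ ℝᵏ. -/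
/-! Let `K` be the support of `e` and `d = G z - G z₀`. Off `K` the residual of `z` is `d`, while on
`K` the reverse triangle inequality costs at most the mass of `d` on `K`; the hypothesis (at
`r = z₀`, `c = z - z₀`) makes that mass smaller than the mass of `d` on `Kᶜ`. -/

open Finset

theorem sum_abs_lt_sum_abs_sub_of_sum_abs_lt_sum_abs_compl {ι : Type*} [Fintype ι]
    [DecidableEq ι] (d e : ι → ℝ) (K : Finset ι) (he : ∀ i ∉ K, e i = 0)
    (hd : ∑ i ∈ K, |d i| < ∑ i ∈ Kᶜ, |d i|) :
    ∑ i, |e i| < ∑ i, |d i - e i| := by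
  have h_mass_e : ∑ i, |e i| = ∑ i ∈ K, |e i| :=
    (sum_subset (subset_univ K) fun i _ hi => by rw [he i hi, abs_zero]).symm
  have h_split : ∑ i, |d i - e i| = ∑ i ∈ K, |d i - e i| + ∑ i ∈ Kᶜ, |d i| := by
    rw [← sum_add_sum_compl K]
    congr 1
    exact sum_congr rfl fun i hi => by rw [he i (mem_compl.mp hi), sub_zero]
  have h_on_K : ∑ i ∈ K, (|e i| - |d i|) ≤ ∑ i ∈ K, |d i - e i| :=
    sum_le_sum fun i _ => abs_sub_comm (d i) (e i) ▸ abs_sub_abs_le_abs_sub (e i) (d i)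
  rw [sum_sub_distrib] at h_on_K
  linarith

theorem l1_recovery_sufficient_general {k n : ℕ} (G : (Fin k → ℝ) → (Fin n → ℝ))
    (ρ : ℝ) (z₀ : Fin k → ℝ)
    (hcond : ∀ r c : Fin k → ℝ, c ≠ 0 → ∀ K : Finset (Fin n),
      (K.card : ℝ) ≤ ρ * n →
        ∑ i ∈ K, |G (r + c) i - G r i| < ∑ i ∈ Kᶜ, |G (r + c) i - G r i|) :
    ∀ e : Fin n → ℝ,
      (((Finset.univ.filter fun i => e i ≠ 0).card : ℝ) ≤ ρ * n) →
      ∀ z : Fin k → ℝ, z ≠ z₀ →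
        ∑ i, |G z₀ i - (G z₀ i + e i)| < ∑ i, |G z i - (G z₀ i + e i)| := by
  intro e he z hz
  have hmass := hcond z₀ (z - z₀) (sub_ne_zero.mpr hz) _ he
  rw [add_sub_cancel] at hmass
  have hsupp : ∀ i ∉ univ.filter fun i => e i ≠ 0, e i = 0 := by simp
  convert sum_abs_lt_sum_abs_sub_of_sum_abs_lt_sum_abs_compl _ e _ hsupp hmass using 2 with i
  · rw [sub_add_cancel_left, abs_neg]
  · ring_nf

/-- ℓ₁ recovery sufficiency: if for every `r`, every nonzero `c` and every
index set `K` with `|K| ≤ ρ* n` the ℓ₁ mass of `G(r+c) − G(r)` on `K` is less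
than that on `Kᶜ`, then for every outlier `e` with `‖e‖₀ ≤ ρ* n`, `z₀` is the
unique minimizer of `‖G(z) − (G(z₀) + e)‖₁`. -/
theorem l1_recovery_sufficient {k n : ℕ} (G : (Fin k → ℝ) → (Fin n → ℝ))
    (ρ : ℝ) (hρ : 0 < ρ) (z₀ : Fin k → ℝ)
    (hcond : ∀ r c : Fin k → ℝ, c ≠ 0 → ∀ K : Finset (Fin n),
      (K.card : ℝ) ≤ ρ * n →
        ∑ i ∈ K, |G (r + c) i - G r i| < ∑ i ∈ Kᶜ, |G (r + c) i - G r i|) :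
    ∀ e : Fin n → ℝ,
      (((Finset.univ.filter fun i => e i ≠ 0).card : ℝ) ≤ ρ * n) →
      ∀ z : Fin k → ℝ, z ≠ z₀ →
        ∑ i, |G z₀ i - (G z₀ i + e i)| < ∑ i, |G z i - (G z₀ i + e i)| :=
  l1_recovery_sufficient_general G ρ z₀ hcond
end

section
/- Let G : ℝᵏ → ℝⁿ and l be a nonnegative integer. Suppose there exist r ∈ ℝᵏ, nonzero c ∈ ℝᵏ, and a subset K ⊆ {1,…,n} with |K| ≤ l such that ‖(G(r+c) − G(r))_K‖₁ ≥ ‖(G(r+c) − G(r))_{Kᶜ}‖₁. Then there exist a ground truth z₀ ∈ ℝᵏ and an error vector e ∈ ℝⁿ with ‖e‖₀ ≤ l such that z₀ is not a unique minimizer of ‖G(z) − (G(z₀) + e)‖₁ over z ∈ ℝᵏ. -/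
/-!
Corrupt the clean measurement `G r` on `K` so that it agrees there with `G (r + c)`: the observation
becomes `K.piecewise (G (r + c)) (G r)`, an `l`-sparse perturbation of `G r`. Its ℓ₁ distance to
`G (r + c)` is the mass of `G (r + c) - G r` on `Kᶜ`, and to `G r` the mass on `K`, so by hypothesis
`r + c` fits the observation at least as well as the ground truth `r`.
-/

open Finset

section Piecewise

variable {ι α : Type*} [Fintype ι] [DecidableEq ι] [AddCommGroup α] [Lattice α] [AddLeftMono α]

theorem Finset.sum_abs_sub_piecewise (K : Finset ι) (f g : ι → α) :
    ∑ i, |f i - K.piecewise g f i| = ∑ i ∈ K, |f i - g i| := by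
  rw [← sum_add_sum_compl K]
  have hKc : ∑ i ∈ Kᶜ, |f i - K.piecewise g f i| = 0 :=
    sum_eq_zero fun i hi => by
      rw [piecewise_eq_of_notMem K g f (mem_compl.mp hi), sub_self, abs_zero]
  rw [hKc, add_zero]
  exact sum_congr rfl fun i hi => by rw [piecewise_eq_of_mem K g f hi]

theorem Finset.sum_abs_sub_piecewise_compl (K : Finset ι) (f g : ι → α) :
    ∑ i, |g i - K.piecewise g f i| = ∑ i ∈ Kᶜ, |g i - f i| := by
  rw [← piecewise_compl, sum_abs_sub_piecewise]

end Piecewise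

theorem Finset.card_filter_piecewise_sub_ne_zero_le {ι α : Type*} [Fintype ι] [DecidableEq ι]
    [AddGroup α] [DecidableEq α] (K : Finset ι) (f g : ι → α) :
    #{i | K.piecewise g f i - f i ≠ 0} ≤ #K := by
  refine card_le_card fun i hi => ?_
  by_contra hiK
  exact (mem_filter.mp hi).2 <| by rw [piecewise_eq_of_notMem K g f hiK, sub_self]

/-- ℓ₁ recovery necessity: if for some `r`, nonzero `c` and index set `K` with
`|K| ≤ l` the ℓ₁ mass of `G(r+c) − G(r)` on `K` is at least that on `Kᶜ`, then
there are a ground truth `z₀` and an `l`-sparse outlier `e` such that `z₀` is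
not a unique minimizer of `‖G(z) − (G(z₀) + e)‖₁`. -/
theorem l1_recovery_necessary {k n : ℕ} (G : (Fin k → ℝ) → (Fin n → ℝ)) (l : ℕ)
    (hbad : ∃ r c : Fin k → ℝ, c ≠ 0 ∧ ∃ K : Finset (Fin n), K.card ≤ l ∧
      ∑ i ∈ Kᶜ, |G (r + c) i - G r i| ≤ ∑ i ∈ K, |G (r + c) i - G r i|) :
    ∃ z₀ : Fin k → ℝ, ∃ e : Fin n → ℝ,
      (Finset.univ.filter fun i => e i ≠ 0).card ≤ l ∧
      ∃ z : Fin k → ℝ, z ≠ z₀ ∧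
        ∑ i, |G z i - (G z₀ i + e i)| ≤ ∑ i, |G z₀ i - (G z₀ i + e i)| := by
  obtain ⟨r, c, hc, K, hK, hsum⟩ := hbad
  set y := K.piecewise (G (r + c)) (G r)
  refine ⟨r, y - G r, (card_filter_piecewise_sub_ne_zero_le K _ _).trans hK,
    r + c, add_ne_left.mpr hc, ?_⟩
  simp only [Pi.sub_apply, add_sub_cancel]
  calc ∑ i, |G (r + c) i - y i| = ∑ i ∈ Kᶜ, |G (r + c) i - G r i| :=
        sum_abs_sub_piecewise_compl K _ _
    _ ≤ ∑ i ∈ K, |G (r + c) i - G r i| := hsum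
    _ = ∑ i ∈ K, |G r i - G (r + c) i| := sum_congr rfl fun i _ => abs_sub_comm _ _
    _ = ∑ i, |G r i - y i| := (sum_abs_sub_piecewise K _ _).symm
end

section
/- Let H ∈ ℝ^{n×k} be a fixed matrix, σ the leaky ReLU with parameter h ∈ (0,1] applied elementwise, δ ∈ ℝⁿ a fixed bias, and λ > 0, ρ* > 0 constants. Suppose (i) for every nonzero w ∈ ℝᵏ, ‖H·w‖₁ > (λ/h)·‖w‖₂·n, and (ii) for every nonzero w ∈ ℝᵏ and every set K ⊆ {1,…,n} with |K| ≤ ρ*·n, ‖(H·w)_K‖₁ < (λ/2)·‖w‖₂·n. Then for every u ∈ ℝᵏ, every nonzero w ∈ ℝᵏ, and every K ⊆ {1,…,n} with |K| ≤ ρ*·n: ‖(σ(H(u+w)+δ) − σ(Hu+δ))_K‖₁ < ‖(σ(H(u+w)+δ) − σ(Hu+δ))_{Kᶜ}‖₁. -/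
/-- Leaky ReLU with parameter `h`. -/
noncomputable def leakyRelu (h t : ℝ) : ℝ := if 0 ≤ t then t else h * t

lemma leakyRelu_lip (h : ℝ) (hh : h ∈ Set.Ioc (0 : ℝ) 1) (x y : ℝ) :
    h * |x - y| ≤ |leakyRelu h x - leakyRelu h y| ∧
      |leakyRelu h x - leakyRelu h y| ≤ |x - y| := by
  obtain ⟨h0, h1⟩ := hh
  unfold leakyRelu
  rcases le_or_gt 0 x with hx | hx <;> rcases le_or_gt 0 y with hy | hy
  · rw [if_pos hx, if_pos hy]
    constructor
    · nlinarith [abs_nonneg (x - y)]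
    · exact le_rfl
  · rw [if_pos hx, if_neg (not_le.mpr hy)]
    constructor <;> cases' abs_cases (x - y) with hc hc <;>
      cases' abs_cases (x - h*y) with hc2 hc2 <;> nlinarith
  · rw [if_neg (not_le.mpr hx), if_pos hy]
    constructor <;> cases' abs_cases (x - y) with hc hc <;>
      cases' abs_cases (h*x - y) with hc2 hc2 <;> nlinarith
  · rw [if_neg (not_le.mpr hx), if_neg (not_le.mpr hy)]
    constructor <;> cases' abs_cases (x - y) with hc hc <;>
      cases' abs_cases (h*x - h*y) with hc2 hc2 <;> nlinarith

/-- If `‖Hw‖₁ > (λ/h)‖w‖₂ n` for every `w ≠ 0`, and `‖(Hw)_K‖₁ < (λ/2)‖w‖₂ n`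
for every `w ≠ 0` and every `K` with `|K| ≤ ρ* n`, then for the elementwise
leaky ReLU `σ` and any bias `δ`, for every `u`, every `w ≠ 0` and every such
`K`, `‖(σ(H(u+w)+δ) − σ(Hu+δ))_K‖₁ < ‖(σ(H(u+w)+δ) − σ(Hu+δ))_{Kᶜ}‖₁`. -/
theorem leakyRelu_layer_l1_condition {n k : ℕ} (H : Matrix (Fin n) (Fin k) ℝ)
    (h : ℝ) (hh : h ∈ Set.Ioc (0 : ℝ) 1) (δ : Fin n → ℝ)
    (lam ρ : ℝ) (hlam : 0 < lam) (hρ : 0 < ρ)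
    (hlow : ∀ w : Fin k → ℝ, w ≠ 0 →
      (lam / h) * Real.sqrt (∑ j, w j ^ 2) * n < ∑ i, |H.mulVec w i|)
    (hupp : ∀ w : Fin k → ℝ, w ≠ 0 → ∀ K : Finset (Fin n),
      (K.card : ℝ) ≤ ρ * n →
        ∑ i ∈ K, |H.mulVec w i| < (lam / 2) * Real.sqrt (∑ j, w j ^ 2) * n) :
    ∀ u w : Fin k → ℝ, w ≠ 0 → ∀ K : Finset (Fin n), (K.card : ℝ) ≤ ρ * n →
      ∑ i ∈ K, |leakyRelu h (H.mulVec (u + w) i + δ i) -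
          leakyRelu h (H.mulVec u i + δ i)| <
        ∑ i ∈ Kᶜ, |leakyRelu h (H.mulVec (u + w) i + δ i) -
          leakyRelu h (H.mulVec u i + δ i)| := by
  intro u w hw K hK
  obtain ⟨h0, h1⟩ := hh
  set a : Fin n → ℝ := fun i =>
    |leakyRelu h (H.mulVec (u + w) i + δ i) - leakyRelu h (H.mulVec u i + δ i)| with ha
  have hdiff : ∀ i, (H.mulVec (u + w) i + δ i) - (H.mulVec u i + δ i) = H.mulVec w i := by
    intro i
    simp [Matrix.mulVec_add]
  have hlb : ∀ i, h * |H.mulVec w i| ≤ a i := by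
    intro i
    have := (leakyRelu_lip h ⟨h0, h1⟩ (H.mulVec (u + w) i + δ i) (H.mulVec u i + δ i)).1
    rwa [hdiff i] at this
  have hub : ∀ i, a i ≤ |H.mulVec w i| := by
    intro i
    have := (leakyRelu_lip h ⟨h0, h1⟩ (H.mulVec (u + w) i + δ i) (H.mulVec u i + δ i)).2
    rwa [hdiff i] at this
  have htot : lam * Real.sqrt (∑ j, w j ^ 2) * n < ∑ i, a i := by
    have h2 : h * ((lam / h) * Real.sqrt (∑ j, w j ^ 2) * n) < h * ∑ i, |H.mulVec w i| :=
      mul_lt_mul_of_pos_left (hlow w hw) h0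
    have h3 : h * ((lam / h) * Real.sqrt (∑ j, w j ^ 2) * n)
        = lam * Real.sqrt (∑ j, w j ^ 2) * n := by
      field_simp
    have h4 : h * ∑ i, |H.mulVec w i| ≤ ∑ i, a i := by
      rw [Finset.mul_sum]
      exact Finset.sum_le_sum fun i _ => hlb i
    linarith
  have hKsum : ∑ i ∈ K, a i < (lam / 2) * Real.sqrt (∑ j, w j ^ 2) * n := by
    calc ∑ i ∈ K, a i ≤ ∑ i ∈ K, |H.mulVec w i| :=
          Finset.sum_le_sum fun i _ => hub i
      _ < _ := hupp w hw K hK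
  have hsplit : ∑ i ∈ K, a i + ∑ i ∈ Kᶜ, a i = ∑ i, a i :=
    Finset.sum_add_sum_compl K a
  linarith
end
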